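/- Let S ⪰ σ_min(S) I with σ_min(S) < 0 and let J be any matrix. Then for any x₀, (J^r x₀)ᵀ S (J^r x₀) ≥ σ_min(S) ‖J^r‖² ‖x₀‖² for all r ≥ 0; consequently, if f(J^r x₀) ≤ (1+ε)^r f(x₀) with f(x₀) < 0 and ε > 0, then ρ(J) ≥ √(1+ε). -/

import Mathlib

/-!
Since `S ⪰ σ I` with `σ < 0`, `f(Jʳx₀) ≥ σ ‖Jʳx₀‖² ≥ σ ‖Jʳ‖² ‖x₀‖²`. Together with
`f(Jʳx₀) ≤ (1+ε)ʳ f(x₀) < 0` this gives `‖Jʳ‖² ≥ c (1+ε)ʳ` with `c = f(x₀) / (σ ‖x₀‖²) > 0`,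
and Gelfand's formula turns this exponential lower bound into `ρ(J) ≥ √(1+ε)`. The spectral
radius is that of the complexified matrix, whose powers have at least the operator norm of the
real ones.
-/

open Filter Topology
open scoped RealInnerProductSpace

theorem mul_opNorm_sq_mul_sq_le_inner_map {E F : Type*} [SeminormedAddCommGroup E]
    [NormedSpace ℝ E] [NormedAddCommGroup F] [InnerProductSpace ℝ F] {σ : ℝ} (hσ : σ ≤ 0)
    {T : F → F} (hT : ∀ y, σ * ‖y‖ ^ 2 ≤ ⟪y, T y⟫) (A : E →L[ℝ] F) (x : E) :
    σ * (‖A‖ ^ 2 * ‖x‖ ^ 2) ≤ ⟪A x, T (A x)⟫ :=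
  calc σ * (‖A‖ ^ 2 * ‖x‖ ^ 2) = σ * (‖A‖ * ‖x‖) ^ 2 := by ring
    _ ≤ σ * ‖A x‖ ^ 2 :=
      mul_le_mul_of_nonpos_left (pow_le_pow_left₀ (norm_nonneg _) (A.le_opNorm x) 2) hσ
    _ ≤ ⟪A x, T (A x)⟫ := hT (A x)

theorem ofReal_le_spectralRadius_of_mul_pow_le_norm_pow {A : Type*} [NormedRing A]
    [NormedAlgebra ℂ A] [CompleteSpace A] {a : A} {c ρ : ℝ} (hc : 0 < c) (hρ : 0 ≤ ρ)
    (h : ∀ r : ℕ, c * ρ ^ r ≤ ‖a ^ r‖) :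
    ENNReal.ofReal ρ ≤ spectralRadius ℂ a := by
  have hroot : Tendsto (fun r : ℕ ↦ c ^ (1 / (r : ℝ)) * ρ) atTop (𝓝 ρ) := by
    have := ((Real.continuousAt_const_rpow hc.ne').tendsto.comp
      tendsto_one_div_atTop_nhds_zero_nat).mul_const ρ
    simpa [Function.comp_def] using this
  refine le_of_tendsto_of_tendsto ((ENNReal.continuous_ofReal.tendsto ρ).comp hroot)
    (spectrum.pow_norm_pow_one_div_tendsto_nhds_spectralRadius a) ?_
  filter_upwards [eventually_ne_atTop 0] with r hr
  refine ENNReal.ofReal_le_ofReal ?_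
  calc c ^ (1 / (r : ℝ)) * ρ = (c * ρ ^ r) ^ (1 / (r : ℝ)) := by
        rw [Real.mul_rpow hc.le (by positivity), ← Real.rpow_natCast, ← Real.rpow_mul hρ,
          mul_one_div_cancel (Nat.cast_ne_zero.mpr hr), Real.rpow_one]
    _ ≤ ‖a ^ r‖ ^ (1 / (r : ℝ)) := by gcongr; exact h r

theorem ofReal_sqrt_le_spectralRadius_of_mul_pow_le_norm_pow_sq {A : Type*} [NormedRing A]
    [NormedAlgebra ℂ A] [CompleteSpace A] {a : A} {c q : ℝ} (hc : 0 < c) (hq : 0 ≤ q)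
    (h : ∀ r : ℕ, c * q ^ r ≤ ‖a ^ r‖ ^ 2) :
    ENNReal.ofReal (√q) ≤ spectralRadius ℂ a := by
  refine ofReal_le_spectralRadius_of_mul_pow_le_norm_pow (Real.sqrt_pos.mpr hc)
    (Real.sqrt_nonneg q) fun r ↦ ?_
  rw [← pow_le_pow_iff_left₀ (by positivity) (norm_nonneg _) two_ne_zero, mul_pow, ← pow_mul,
    mul_comm r, pow_mul, Real.sq_sqrt hc.le, Real.sq_sqrt hq]
  exact h r

theorem EuclideanSpace.norm_toLp_ofReal {n : Type*} [Fintype n] (v : n → ℝ) :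
    ‖WithLp.toLp 2 (fun i ↦ (v i : ℂ))‖ = ‖WithLp.toLp 2 v‖ := by
  simp [EuclideanSpace.norm_eq]

namespace Matrix

variable {n : Type*} [Fintype n] [DecidableEq n]

theorem norm_toEuclideanCLM_le_norm_toEuclideanCLM_map_ofReal (M : Matrix n n ℝ) :
    ‖toEuclideanCLM (𝕜 := ℝ) M‖ ≤ ‖toEuclideanCLM (𝕜 := ℂ) (M.map Complex.ofReal)‖ := by
  refine ContinuousLinearMap.opNorm_le_bound _ (norm_nonneg _) fun x ↦ ?_
  set Mc := toEuclideanCLM (𝕜 := ℂ) (M.map Complex.ofReal)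
  set xc : EuclideanSpace ℂ n := WithLp.toLp 2 (fun i ↦ (x i : ℂ))
  have hmap : Mc xc = WithLp.toLp 2 (fun i ↦ ((M *ᵥ x.ofLp) i : ℂ)) := by
    ext i
    exact (RingHom.map_mulVec Complex.ofRealHom M x.ofLp i).symm
  calc ‖toEuclideanCLM (𝕜 := ℝ) M x‖ = ‖Mc xc‖ := by
        rw [hmap, EuclideanSpace.norm_toLp_ofReal]; rfl
    _ ≤ ‖Mc‖ * ‖xc‖ := Mc.le_opNorm xc
    _ = ‖Mc‖ * ‖x‖ := by rw [EuclideanSpace.norm_toLp_ofReal]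

theorem toEuclideanCLM_map_ofReal_pow (M : Matrix n n ℝ) (r : ℕ) :
    toEuclideanCLM (𝕜 := ℂ) (M.map Complex.ofReal) ^ r
      = toEuclideanCLM (𝕜 := ℂ) ((M ^ r).map Complex.ofReal) := by
  rw [← map_pow]
  exact congrArg _ (map_pow Complex.ofRealHom.mapMatrix M r).symm

theorem norm_toEuclideanCLM_pow_le_norm_toEuclideanCLM_map_ofReal_pow (M : Matrix n n ℝ)
    (r : ℕ) :
    ‖toEuclideanCLM (𝕜 := ℝ) M ^ r‖ ≤ ‖toEuclideanCLM (𝕜 := ℂ) (M.map Complex.ofReal) ^ r‖ := by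
  rw [← map_pow, toEuclideanCLM_map_ofReal_pow]
  exact norm_toEuclideanCLM_le_norm_toEuclideanCLM_map_ofReal _

end Matrix

theorem quadratic_divergence_spectral_radius_general
    (n : ℕ) (S J : Matrix (Fin n) (Fin n) ℝ)
    (σ : ℝ) (hσ : σ < 0)
    (hlower : ∀ x : EuclideanSpace ℝ (Fin n),
      σ * ‖x‖ ^ 2 ≤ ⟪x, (Matrix.toEuclideanCLM (𝕜 := ℝ) S) x⟫)
    (x₀ : EuclideanSpace ℝ (Fin n)) (ε : ℝ) (hε : 0 < ε)
    (hf0 : ⟪x₀, (Matrix.toEuclideanCLM (𝕜 := ℝ) S) x₀⟫ < 0)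
    (hrec : ∀ r : ℕ,
      ⟪((Matrix.toEuclideanCLM (𝕜 := ℝ) J) ^ r) x₀,
        (Matrix.toEuclideanCLM (𝕜 := ℝ) S)
          (((Matrix.toEuclideanCLM (𝕜 := ℝ) J) ^ r) x₀)⟫ ≤
        (1 + ε) ^ r * ⟪x₀, (Matrix.toEuclideanCLM (𝕜 := ℝ) S) x₀⟫) :
    (∀ r : ℕ,
      σ * (‖(Matrix.toEuclideanCLM (𝕜 := ℝ) J) ^ r‖ ^ 2 * ‖x₀‖ ^ 2) ≤
        ⟪((Matrix.toEuclideanCLM (𝕜 := ℝ) J) ^ r) x₀,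
          (Matrix.toEuclideanCLM (𝕜 := ℝ) S)
            (((Matrix.toEuclideanCLM (𝕜 := ℝ) J) ^ r) x₀)⟫) ∧
    ENNReal.ofReal (Real.sqrt (1 + ε)) ≤
      spectralRadius ℂ
        (Matrix.toEuclideanCLM (𝕜 := ℂ) (J.map Complex.ofReal)) := by
  have hbound := fun r : ℕ ↦
    mul_opNorm_sq_mul_sq_le_inner_map hσ.le hlower (Matrix.toEuclideanCLM (𝕜 := ℝ) J ^ r) x₀
  refine ⟨hbound, ?_⟩
  set f₀ := ⟪x₀, Matrix.toEuclideanCLM (𝕜 := ℝ) S x₀⟫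
  have hσx₀ : σ * ‖x₀‖ ^ 2 < 0 := (hlower x₀).trans_lt hf0
  have hgrowth (r : ℕ) :
      f₀ / (σ * ‖x₀‖ ^ 2) * (1 + ε) ^ r ≤ ‖Matrix.toEuclideanCLM (𝕜 := ℝ) J ^ r‖ ^ 2 := by
    rw [div_mul_eq_mul_div, div_le_iff_of_neg hσx₀]
    linarith [(hbound r).trans (hrec r)]
  refine ofReal_sqrt_le_spectralRadius_of_mul_pow_le_norm_pow_sq (div_pos_of_neg_of_neg hf0 hσx₀)
    (by linarith) fun r ↦ (hgrowth r).trans ?_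
  gcongr
  exact Matrix.norm_toEuclideanCLM_pow_le_norm_toEuclideanCLM_map_ofReal_pow J r

/-- If `S ⪰ σ I` with `σ < 0` then `f(Jʳx₀) ≥ σ ‖Jʳ‖² ‖x₀‖²`; consequently
if `f(Jʳx₀) ≤ (1+ε)ʳ f(x₀)` with `f(x₀) < 0`, `ε > 0`, then
`ρ(J) ≥ √(1+ε)`. -/
theorem quadratic_divergence_spectral_radius
    (n : ℕ) (S J : Matrix (Fin n) (Fin n) ℝ) (hS : S.IsSymm)
    (σ : ℝ) (hσ : σ < 0)
    (hlower : ∀ x : EuclideanSpace ℝ (Fin n),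
      σ * ‖x‖ ^ 2 ≤ ⟪x, (Matrix.toEuclideanCLM (𝕜 := ℝ) S) x⟫)
    (x₀ : EuclideanSpace ℝ (Fin n)) (ε : ℝ) (hε : 0 < ε)
    (hf0 : ⟪x₀, (Matrix.toEuclideanCLM (𝕜 := ℝ) S) x₀⟫ < 0)
    (hrec : ∀ r : ℕ,
      ⟪((Matrix.toEuclideanCLM (𝕜 := ℝ) J) ^ r) x₀,
        (Matrix.toEuclideanCLM (𝕜 := ℝ) S)
          (((Matrix.toEuclideanCLM (𝕜 := ℝ) J) ^ r) x₀)⟫ ≤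
        (1 + ε) ^ r * ⟪x₀, (Matrix.toEuclideanCLM (𝕜 := ℝ) S) x₀⟫) :
    (∀ r : ℕ,
      σ * (‖(Matrix.toEuclideanCLM (𝕜 := ℝ) J) ^ r‖ ^ 2 * ‖x₀‖ ^ 2) ≤
        ⟪((Matrix.toEuclideanCLM (𝕜 := ℝ) J) ^ r) x₀,
          (Matrix.toEuclideanCLM (𝕜 := ℝ) S)
            (((Matrix.toEuclideanCLM (𝕜 := ℝ) J) ^ r) x₀)⟫) ∧
    ENNReal.ofReal (Real.sqrt (1 + ε)) ≤
      spectralRadius ℂ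
        (Matrix.toEuclideanCLM (𝕜 := ℂ) (J.map Complex.ofReal)) :=
  quadratic_divergence_spectral_radius_general n S J σ hσ hlower x₀ ε hε hf0 hrec
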